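/- Let f be a flow over time repeated during [θ₁, θ₂] and let B be a cycle in N_{φ(f)} with τ(B) = 0 and h := h_{φ(f)}(B). Augmenting f simultaneously along all liftings C_i = lift(B, i) for i ∈ {θ₁, ..., θ₂ − h} yields a flow over time f' that is repeated during [θ₁ + h, θ₂ − h], and the projection satisfies φ(f') = φ(f) + u(B)·χ^B. -/

import Mathlib

/-- A chain of arcs from `p` to `q`: each arc's tail matches the current vertex. -/
def ArcChain {W E : Type*} (tl hd : E → W) : W → W → List E → Prop
  | p, q, [] => p = q
  | p, q, e :: l => tl e = p ∧ ArcChain tl hd (hd e) q l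

/-- A flow over time network: directed multigraph, source, sink, integral capacities and
transit times. -/
structure FOTN (V A : Type*) where
  tail : A → V
  head : A → V
  s : V
  t : V
  u : A → ℤ
  τ : A → ℕ

/-- Transit times extended to residual (backward) arcs by negation. -/
def resTT {A : Type*} (τ : A → ℕ) : A ⊕ A → ℤ :=
  Sum.elim (fun a => (τ a : ℤ)) (fun a => -(τ a : ℤ))

/-- Costs extended to residual (backward) arcs by negation. -/
def resC {A : Type*} (c : A → ℤ) : A ⊕ A → ℤ := Sum.elim c (fun a => -c a)

/-- Base arc of a residual arc. -/
def arcBase {A : Type*} : A ⊕ A → A := Sum.elim id id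

/-- The partial (prefix) sums of `g` along a list, starting with `0`. -/
def psums {E : Type*} (g : E → ℤ) : List E → List ℤ
  | [] => [0]
  | e :: l => 0 :: (psums g l).map (fun z => g e + z)

/-- Minimum partial sum `h⁻` (`0` is itself always a partial sum). -/
def hlo {E : Type*} (g : E → ℤ) (l : List E) : ℤ := (psums g l).foldr min 0

/-- Maximum partial sum `h⁺`. -/
def hhi {E : Type*} (g : E → ℤ) (l : List E) : ℤ := (psums g l).foldr max 0

/-- The height of a walk: `h⁺ - h⁻`. -/
def spreadOf {E : Type*} (g : E → ℤ) (l : List E) : ℤ := hhi g l - hlo g l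

/-- Lift a list of residual arcs starting at (integer) time `t`; each arc `e` is assigned
the layer of the copy it traverses, i.e. the smaller of its two endpoint times. -/
def liftFrom {E : Type*} (g : E → ℤ) : ℤ → List E → List (E × ℕ)
  | _, [] => []
  | t, e :: l => (e, (t + min 0 (g e)).toNat) :: liftFrom g (t + g e) l

/-- The lifting of a walk to layer `θ'`: start at time `max θ' (θ' - h⁻)`. -/
def liftW {E : Type*} (g : E → ℤ) (l : List E) (θ' : ℕ) : List (E × ℕ) :=
  liftFrom g ((θ' : ℤ) - min 0 (hlo g l)) l

namespace FOTN
variable {V A : Type*} (N : FOTN V A)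

/-- Tail of a residual arc in the base network. -/
def bTail : A ⊕ A → V := Sum.elim N.tail N.head

def bHead : A ⊕ A → V := Sum.elim N.head N.tail

/-- Residual capacity in the base network with respect to a static flow `x`. -/
def bCap (x : A → ℤ) : A ⊕ A → ℤ := Sum.elim (fun a => N.u a - x a) x

/-- A walk in the residual network `N_x` of the base network. -/
def IsResWalk (x : A → ℤ) (p q : V) (l : List (A ⊕ A)) : Prop :=
  ArcChain N.bTail N.bHead p q l ∧ ∀ e ∈ l, 0 < N.bCap x e

/-- A cycle in the residual network `N_x` of the base network. -/
def IsResCycle (x : A → ℤ) (p : V) (l : List (A ⊕ A)) : Prop :=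
  N.IsResWalk x p p l ∧ l ≠ [] ∧ (l.map N.bHead).Nodup

/-- Tail of a residual time-expanded arc `(e, ℓ)`: the copy `a^ℓ` of `a` goes from layer
`ℓ` to layer `ℓ + τ(a)`; backward arcs are reversed. -/
def teTail : (A ⊕ A) × ℕ → V × ℕ
  | (Sum.inl a, ℓ) => (N.tail a, ℓ)
  | (Sum.inr a, ℓ) => (N.head a, ℓ + N.τ a)

def teHead : (A ⊕ A) × ℕ → V × ℕ
  | (Sum.inl a, ℓ) => (N.head a, ℓ + N.τ a)
  | (Sum.inr a, ℓ) => (N.tail a, ℓ)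

/-- Residual capacity of a time-expanded residual arc with respect to a flow over time. -/
def teCap (f : A → ℕ → ℤ) : (A ⊕ A) × ℕ → ℤ
  | (Sum.inl a, ℓ) => N.u a - f a ℓ
  | (Sum.inr a, ℓ) => f a ℓ

/-- The arc lies between layers `θ₁` and `θ₂` of the time-expanded network. -/
def InLayers (θ₁ θ₂ : ℕ) (e : (A ⊕ A) × ℕ) : Prop :=
  θ₁ ≤ e.2 ∧ e.2 + N.τ (arcBase e.1) ≤ θ₂

/-- Membership in the residual time-expanded network `N^{[θ₁,θ₂]}_f`. -/
def InResTEN (f : A → ℕ → ℤ) (θ₁ θ₂ : ℕ) (e : (A ⊕ A) × ℕ) : Prop :=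
  0 < N.teCap f e ∧ N.InLayers θ₁ θ₂ e

/-- A walk in the residual time-expanded network `N^{[θ₁,θ₂]}_f`. -/
def IsTENWalk (f : A → ℕ → ℤ) (θ₁ θ₂ : ℕ) (p q : V × ℕ) (l : List ((A ⊕ A) × ℕ)) : Prop :=
  ArcChain N.teTail N.teHead p q l ∧ ∀ e ∈ l, N.InResTEN f θ₁ θ₂ e

/-- A cycle in the residual time-expanded network `N^{[θ₁,θ₂]}_f`. -/
def IsTENCycle (f : A → ℕ → ℤ) (θ₁ θ₂ : ℕ) (p : V × ℕ) (l : List ((A ⊕ A) × ℕ)) : Prop :=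
  N.IsTENWalk f θ₁ θ₂ p p l ∧ l ≠ [] ∧ (l.map N.teHead).Nodup

/-- A flow over time with time horizon `θ`, as a static flow in the time-expanded
network: capacities, support on the existing copies `a^ℓ`, `ℓ ∈ {1,…,θ-1}`, and flow
conservation at every node other than the super-terminals (i.e. at all `v ≠ s, t`). -/
def IsFlowOverTime [Fintype A] [DecidableEq V] (f : A → ℕ → ℤ) (θ : ℕ) : Prop :=
  (∀ a ℓ, 0 ≤ f a ℓ ∧ f a ℓ ≤ N.u a) ∧
  (∀ a ℓ, ¬(1 ≤ ℓ ∧ ℓ + 1 ≤ θ) → f a ℓ = 0) ∧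
  (∀ v, v ≠ N.s → v ≠ N.t → ∀ ℓ : ℕ,
    (∑ a : A, if N.head a = v then f a (ℓ - N.τ a) else 0) =
    (∑ a : A, if N.tail a = v then f a ℓ else 0))

/-- `f` is repeated during `[θ₁, θ₂]`. -/
def Repeated (_Nw : FOTN V A) (f : A → ℕ → ℤ) (θ₁ θ₂ : ℕ) : Prop :=
  ∀ a : A, ∀ ℓ : ℕ, θ₁ ≤ ℓ → ℓ < θ₂ → f a ℓ = f a (ℓ + 1)

/-- The projection `φ(f)(a) := f(a^{θ₁})`. -/
def proj (_Nw : FOTN V A) (f : A → ℕ → ℤ) (θ₁ : ℕ) : A → ℤ := fun a => f a θ₁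

end FOTN

/-! Every lifting of `B` is a vertical translate of `lift(B, 0)`, whose arcs lie in layers
`0, …, h`. So a copy `(e, ℓ)` with `θ₁ + h ≤ ℓ ≤ θ₂ − h` occurs in `lift(B, i)` as often as
`(e, ℓ − i)` occurs in `lift(B, 0)`, and summing over the window of starting layers `i`
meets every arc of `lift(B, 0)` exactly once. The augmentation therefore changes every such
copy of an arc `a` by the same amount, `m` times the number of forward minus backward
occurrences of `a` in `B`, while `f` itself is constant on that range. -/

-- The counts in the theorem use the derived `BEq` on `A ⊕ A`, not the one from `DecidableEq`.
instance Sum.instLawfulBEq {α β : Type*} [BEq α] [BEq β] [LawfulBEq α] [LawfulBEq β] :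
    LawfulBEq (α ⊕ β) where
  rfl {x} := by
    cases x with
    | inl a => exact beq_self_eq_true a
    | inr b => exact beq_self_eq_true b
  eq_of_beq {x y} h := by
    cases x <;> cases y <;> first | cases h | exact congrArg _ (eq_of_beq h)

theorem List.foldr_mem_cons {α : Type*} {op : α → α → α} (hop : ∀ x y, op x y = x ∨ op x y = y)
    (b : α) (l : List α) : l.foldr op b ∈ b :: l := by
  induction l with
  | nil => exact mem_cons_self
  | cons x l ih =>
    rcases hop x (l.foldr op b) with h | h <;> simp only [foldr_cons, h, mem_cons] at ih ⊢ <;> tauto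

section Heights

variable {E : Type*} {g : E → ℤ} {l : List E} {x : ℤ}

theorem zero_mem_psums (g : E → ℤ) (l : List E) : 0 ∈ psums g l := by
  cases l <;> simp [psums]

theorem add_mem_psums_cons (e : E) (hx : x ∈ psums g l) : g e + x ∈ psums g (e :: l) :=
  List.mem_cons_of_mem _ (List.mem_map_of_mem hx)

theorem hlo_le_of_mem_psums (hx : x ∈ psums g l) : hlo g l ≤ x := List.min_le_of_le' 0 hx le_rfl

theorem le_hhi_of_mem_psums (hx : x ∈ psums g l) : x ≤ hhi g l := List.le_max_of_le' 0 hx le_rfl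

theorem hlo_mem_psums (g : E → ℤ) (l : List E) : hlo g l ∈ psums g l := by
  rcases List.mem_cons.1 (List.foldr_mem_cons min_choice 0 (psums g l)) with h | h
  · rw [hlo, h]
    exact zero_mem_psums g l
  · exact h

theorem hhi_mem_psums (g : E → ℤ) (l : List E) : hhi g l ∈ psums g l := by
  rcases List.mem_cons.1 (List.foldr_mem_cons max_choice 0 (psums g l)) with h | h
  · rw [hhi, h]
    exact zero_mem_psums g l
  · exact h

theorem hlo_nonpos (g : E → ℤ) (l : List E) : hlo g l ≤ 0 :=
  hlo_le_of_mem_psums (zero_mem_psums g l)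

theorem hhi_nonneg (g : E → ℤ) (l : List E) : 0 ≤ hhi g l :=
  le_hhi_of_mem_psums (zero_mem_psums g l)

theorem hlo_cons_le (g : E → ℤ) (e : E) (l : List E) : hlo g (e :: l) ≤ g e + hlo g l :=
  hlo_le_of_mem_psums (add_mem_psums_cons e (hlo_mem_psums g l))

theorem add_hhi_le_hhi_cons (g : E → ℤ) (e : E) (l : List E) : g e + hhi g l ≤ hhi g (e :: l) :=
  le_hhi_of_mem_psums (add_mem_psums_cons e (hhi_mem_psums g l))

end Heights

section Lifting

variable {E : Type*} (g : E → ℤ)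

theorem map_fst_liftFrom (t : ℤ) (l : List E) : (liftFrom g t l).map Prod.fst = l := by
  induction l generalizing t with
  | nil => rfl
  | cons e l ih => simp [liftFrom, ih]

-- `ht` keeps every layer `t + min 0 (g e)` nonnegative, so `Int.toNat` does not truncate.
theorem liftFrom_add_nat (k : ℕ) (l : List E) {t : ℤ} (ht : 0 ≤ t + hlo g l) :
    liftFrom g (t + k) l = (liftFrom g t l).map (Prod.map id (· + k)) := by
  induction l generalizing t with
  | nil => rfl
  | cons e l ih =>
    have := hlo_cons_le g e l
    have := hlo_nonpos g l
    have := hlo_nonpos g (e :: l)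
    simp only [liftFrom, List.map_cons, Prod.map, id, List.cons.injEq, Prod.mk.injEq, true_and]
    constructor
    · omega
    · rw [← ih (by omega)]
      congr 1
      ring

theorem layer_le_of_mem_liftFrom {l : List E} {t : ℤ} (ht : 0 ≤ t + hlo g l) {q : E × ℕ}
    (hq : q ∈ liftFrom g t l) : (q.2 : ℤ) ≤ t + hhi g l := by
  induction l generalizing t with
  | nil => simp [liftFrom] at hq
  | cons e l ih =>
    have := hlo_cons_le g e l
    have := add_hhi_le_hhi_cons g e l
    have := hlo_nonpos g l
    have := hhi_nonneg g l
    rcases List.mem_cons.1 hq with rfl | hq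
    · omega
    · have := ih (t := t + g e) (by omega) hq
      omega

theorem liftW_eq_map_liftW_zero (l : List E) (i : ℕ) :
    liftW g l i = (liftW g l 0).map (Prod.map id (· + i)) := by
  have := hlo_nonpos g l
  rw [liftW, liftW, ← liftFrom_add_nat g i l (by omega)]
  congr 1
  push_cast
  ring

theorem layer_le_of_mem_liftW_zero {l : List E} {q : E × ℕ} (hq : q ∈ liftW g l 0) :
    q.2 ≤ (spreadOf g l).toNat := by
  have := hlo_nonpos g l
  have := layer_le_of_mem_liftFrom g (by omega) hq
  rw [spreadOf]
  omega

end Lifting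

section Counting

variable {E : Type*} [BEq E] [LawfulBEq E]

theorem count_flatten_map_shift (L : List (E × ℕ)) (σ : E) {s n ℓ : ℕ}
    (hL : ∀ q ∈ L, s + q.2 ≤ ℓ ∧ ℓ < s + n + q.2) :
    ((List.range' s n).map fun i => L.map (Prod.map id (· + i))).flatten.count (σ, ℓ)
      = (L.map Prod.fst).count σ := by
  classical
  induction L with
  | nil => simp
  | cons q L ih =>
    have hq := hL q List.mem_cons_self
    simp only [List.map_cons, List.count_cons, List.count_flatten, List.map_map,
      Function.comp_def, List.sum_map_add] at ih ⊢
    rw [ih fun q' hq' => hL q' (List.mem_cons_of_mem _ hq'),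
      ← List.sum_toFinset _ List.nodup_range']
    congr 1
    rw [Finset.sum_eq_single (ℓ - q.2)]
    · have : q.2 + (ℓ - q.2) = ℓ := by omega
      simp [Prod.ext_iff, this]
    · intro i _ hi
      simp only [beq_iff_eq, Prod.ext_iff, Prod.map_fst, id_eq, Prod.map_snd, ite_eq_right_iff,
        one_ne_zero, imp_false, not_and]
      omega
    · intro h
      simp only [List.mem_toFinset, List.mem_range'_1, not_and, not_lt] at h
      omega

theorem count_flatten_liftW (g : E → ℤ) (B : List E) (σ : E) {θ₁ n ℓ : ℕ}
    (hl : θ₁ + (spreadOf g B).toNat ≤ ℓ) (hr : ℓ < θ₁ + n) :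
    ((List.range' θ₁ n).map (liftW g B)).flatten.count (σ, ℓ) = B.count σ := by
  rw [show liftW g B = _ from funext (liftW_eq_map_liftW_zero g B)]
  rw [count_flatten_map_shift, liftW, map_fst_liftFrom]
  intro q hq
  have := layer_le_of_mem_liftW_zero g hq
  omega

end Counting

theorem FOTN.Repeated.apply_eq {V A : Type*} {N : FOTN V A} {f : A → ℕ → ℤ} {θ₁ θ₂ : ℕ}
    (hrep : N.Repeated f θ₁ θ₂) (a : A) {ℓ : ℕ} (h₁ : θ₁ ≤ ℓ) (h₂ : ℓ ≤ θ₂) :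
    f a ℓ = f a θ₁ := by
  induction ℓ, h₁ using Nat.le_induction with
  | base => rfl
  | succ ℓ hℓ ih => rw [← hrep a ℓ hℓ (by omega), ih (by omega)]

theorem augmenting_along_all_liftings_general {V A : Type*}
    [DecidableEq A] (N : FOTN V A)
    (f : A → ℕ → ℤ) (θ₁ θ₂ : ℕ)
    (hrep : N.Repeated f θ₁ θ₂)
    (B : List (A ⊕ A))
    (hfit : θ₁ + (spreadOf (resTT N.τ) B).toNat ≤ θ₂ - (spreadOf (resTT N.τ) B).toNat)
    (m : ℤ) :
    let h : ℕ := (spreadOf (resTT N.τ) B).toNat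
    let allL : List ((A ⊕ A) × ℕ) :=
      ((List.range' θ₁ (θ₂ - h - θ₁ + 1)).map (fun i => liftW (resTT N.τ) B i)).flatten
    let f' : A → ℕ → ℤ := fun a ℓ =>
      f a ℓ + m * ((allL.count (Sum.inl a, ℓ) : ℤ) - (allL.count (Sum.inr a, ℓ) : ℤ))
    N.Repeated f' (θ₁ + h) (θ₂ - h) ∧
    (∀ a : A, N.proj f' (θ₁ + h) a
      = N.proj f θ₁ a + m * ((B.count (Sum.inl a) : ℤ) - (B.count (Sum.inr a) : ℤ))) := by
  intro h allL f'
  have hcount : ∀ σ ℓ, θ₁ + h ≤ ℓ → ℓ ≤ θ₂ - h → allL.count (σ, ℓ) = B.count σ :=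
    fun σ ℓ hl hr => count_flatten_liftW (n := θ₂ - h - θ₁ + 1) _ B σ hl (by omega)
  refine ⟨fun a ℓ hl hr => ?_, fun a => ?_⟩
  · simp only [f', hcount _ _ hl hr.le, hcount _ _ (by omega : θ₁ + h ≤ ℓ + 1) hr,
      hrep a ℓ (by omega) (by omega)]
  · simp only [FOTN.proj, f', hcount _ _ le_rfl hfit, hrep.apply_eq a (by omega : θ₁ ≤ θ₁ + h)
      (by omega)]

/-- Augmenting `f` simultaneously along all liftings `lift(B, i)`,
`i ∈ {θ₁, …, θ₂ − h}`, of a cycle `B` of `N_{φ(f)}` with `τ(B) = 0` and height `h`, each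
by the residual capacity `m = u(B)`, yields a flow over time `f'` that is repeated during
`[θ₁ + h, θ₂ − h]` with projection `φ(f') = φ(f) + u(B)·χ^B`. -/
theorem augmenting_along_all_liftings {V A : Type*}
    [Fintype A] [DecidableEq V] [DecidableEq A] (N : FOTN V A) (hτ : ∀ a, N.τ a ≤ 1)
    (f : A → ℕ → ℤ) (θ θ₁ θ₂ : ℕ)
    (hf : N.IsFlowOverTime f θ) (hrep : N.Repeated f θ₁ θ₂)
    (h1 : 1 ≤ θ₁) (h2 : θ₁ + 2 ≤ θ₂) (h3 : θ₂ + 1 ≤ θ)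
    (p : V) (B : List (A ⊕ A)) (hB : N.IsResCycle (N.proj f θ₁) p B)
    (hτB : (B.map (resTT N.τ)).sum = 0)
    (hfit : θ₁ + (spreadOf (resTT N.τ) B).toNat ≤ θ₂ - (spreadOf (resTT N.τ) B).toNat)
    (m : ℤ) (hub : ∀ e ∈ B, m ≤ N.bCap (N.proj f θ₁) e)
    (hmem : ∃ e ∈ B, N.bCap (N.proj f θ₁) e = m) :
    let h : ℕ := (spreadOf (resTT N.τ) B).toNat
    let allL : List ((A ⊕ A) × ℕ) :=
      ((List.range' θ₁ (θ₂ - h - θ₁ + 1)).map (fun i => liftW (resTT N.τ) B i)).flatten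
    let f' : A → ℕ → ℤ := fun a ℓ =>
      f a ℓ + m * ((allL.count (Sum.inl a, ℓ) : ℤ) - (allL.count (Sum.inr a, ℓ) : ℤ))
    N.Repeated f' (θ₁ + h) (θ₂ - h) ∧
    (∀ a : A, N.proj f' (θ₁ + h) a
      = N.proj f θ₁ a + m * ((B.count (Sum.inl a) : ℤ) - (B.count (Sum.inr a) : ℤ))) :=
  augmenting_along_all_liftings_general N f θ₁ θ₂ hrep B hfit m
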